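/- Let Γ be a C³ hypersurface with unit normal n, and let w be a C³ vector field on Γ. Then ∇_Γ(Div_Γ w) = P Div_Γ(D_Γwᵀ) − D_Γn D_Γwᵀ n, where P = I − n⊗n. -/

import Mathlib

open scoped RealInnerProductSpace

/-- The rank-one operator `u ⊗ v`. -/
noncomputable def rankOne {V : Type*} [NormedAddCommGroup V] [InnerProductSpace ℝ V]
    (u v : V) : V →ₗ[ℝ] V where
  toFun w := ⟪v, w⟫ • u
  map_add' x y := by simp [inner_add_right, add_smul]
  map_smul' c x := by simp [inner_smul_right, mul_smul]

/-- The orthogonal projection `P = I - n ⊗ n` onto the tangent hyperplane. -/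
noncomputable def proj {V : Type*} [NormedAddCommGroup V] [InnerProductSpace ℝ V]
    (n : V) : V →ₗ[ℝ] V :=
  LinearMap.id - rankOne n n

/-!
Write `n = ∇b`, `H = Dn` and `W = Dw`. The Hessian `H` is symmetric, and `|n| = 1` near `x`
forces `H n = 0`. Differentiating `y ↦ Dw(y) P(y) u` in a direction `v` gives
`D²w(v, P u) - ⟪H v, u⟫ W n - ⟪n, u⟫ W H v`; by the symmetry of `D²w` and of `H`, its value at
`v = P e` equals the derivative of `y ↦ Dw(y) P(y) (P e)` in the direction `P u`, up to the
curvature term `⟪n, u⟫ W H e`. Tracing over `u` turns the left side into `∇_Γ(Div_Γ w) · P e`,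
the right side into `Div_Γ(D_Γw (P e))`, and the curvature term into
`⟪n, W H e⟫ = ⟪D_Γn D_Γwᵀ n, e⟫`.
-/

open scoped Topology

section Projection

variable {V : Type*} [NormedAddCommGroup V] [InnerProductSpace ℝ V]

lemma proj_apply (n u : V) : proj n u = u - ⟪n, u⟫ • n := by
  simp [proj, rankOne]

lemma isSymmetric_proj (n : V) : (proj n).IsSymmetric := fun u v => by
  simp only [proj_apply, inner_sub_left, inner_sub_right, real_inner_smul_left,
    real_inner_smul_right, real_inner_comm u n]
  ring

lemma proj_eq_self_of_inner_eq_zero {n u : V} (h : ⟪n, u⟫ = 0) : proj n u = u := by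
  simp [proj_apply, h]

lemma inner_proj_right_eq_zero {n : V} (hn : ‖n‖ = 1) (u : V) : ⟪n, proj n u⟫ = 0 := by
  rw [proj_apply, inner_sub_right, real_inner_smul_right, real_inner_self_eq_norm_sq, hn]
  ring

lemma proj_proj {n : V} (hn : ‖n‖ = 1) (u : V) : proj n (proj n u) = proj n u :=
  proj_eq_self_of_inner_eq_zero (inner_proj_right_eq_zero hn u)

lemma map_proj_of_map_eq_zero {W F : Type*} [AddCommGroup W] [Module ℝ W] [FunLike F V W]
    [LinearMapClass F ℝ V W] {T : F} {n : V} (h : T n = 0) (u : V) : T (proj n u) = T u := by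
  simp [proj_apply, h]

lemma proj_apply_eq_self_of_isSymmetric {T : V →ₗ[ℝ] V} (hT : T.IsSymmetric) {n : V}
    (hTn : T n = 0) (u : V) : proj n (T u) = T u :=
  proj_eq_self_of_inner_eq_zero (by rw [← hT, hTn, inner_zero_left])

lemma inner_comp_proj_adjoint_apply {F : Type*} [NormedAddCommGroup F] [InnerProductSpace ℝ F]
    [FiniteDimensional ℝ V] [FiniteDimensional ℝ F] {H : V →ₗ[ℝ] V} (hH : H.IsSymmetric)
    {n : V} (hHn : H n = 0) (W : V →ₗ[ℝ] F) (a : F) (e : V) :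
    ⟪(H ∘ₗ proj n) (LinearMap.adjoint (W ∘ₗ proj n) a), e⟫ = ⟪a, W (H e)⟫ := by
  rw [LinearMap.comp_apply, hH, isSymmetric_proj, LinearMap.adjoint_inner_left,
    LinearMap.comp_apply, proj_apply_eq_self_of_isSymmetric hH hHn,
    proj_apply_eq_self_of_isSymmetric hH hHn]

end Projection

section Calculus

variable {E V F : Type*} [NormedAddCommGroup E] [NormedSpace ℝ E] [NormedAddCommGroup V]
  [InnerProductSpace ℝ V] [NormedAddCommGroup F] [NormedSpace ℝ F] {x : E}

lemma ContDiffAt.hasFDerivAt_fderiv {f : E → F} (hf : ContDiffAt ℝ 2 f x) :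
    HasFDerivAt (fderiv ℝ f) (fderiv ℝ (fderiv ℝ f) x) x :=
  ((hf.fderiv_right (m := 1) le_rfl).differentiableAt one_ne_zero).hasFDerivAt

lemma HasFDerivAt.inner_apply_eq_zero_of_eventually_norm_eq {f : E → V} {f' : E →L[ℝ] V}
    {c : ℝ} (hf : HasFDerivAt f f' x) (hc : ∀ᶠ y in 𝓝 x, ‖f y‖ = c) (v : E) :
    ⟪f' v, f x⟫ = 0 := by
  have hconst : HasFDerivAt (fun y => ⟪f y, f y⟫) (0 : E →L[ℝ] ℝ) x :=
    (hasFDerivAt_const (c ^ 2) x).congr_of_eventuallyEq <| hc.mono fun y hy => by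
      simp only [real_inner_self_eq_norm_sq, hy]
  have h := congrArg (· v) ((hf.inner ℝ hf).unique hconst)
  simp only [ContinuousLinearMap.comp_apply, ContinuousLinearMap.prod_apply,
    fderivInnerCLM_apply, zero_apply] at h
  linarith [real_inner_comm (f x) (f' v)]

lemma fderiv_trace_apply {ι : Type*} [Fintype ι] (bs : OrthonormalBasis ι ℝ V)
    {A : E → V →ₗ[ℝ] V} (hA : ∀ u, DifferentiableAt ℝ (fun y => A y u) x) (v : E) :
    fderiv ℝ (fun y => LinearMap.trace ℝ V (A y)) x v =
      ∑ i, ⟪bs i, fderiv ℝ (fun y => A y (bs i)) x v⟫ := by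
  simp_rw [LinearMap.trace_eq_sum_inner _ bs]
  rw [fderiv_fun_sum fun i _ => (differentiableAt_const _).inner ℝ (hA (bs i))]
  simp [fderiv_inner_apply ℝ (differentiableAt_const _) (hA _)]

lemma HasFDerivAt.comp_proj_apply {G : E → V →L[ℝ] F} {B : E →L[ℝ] V →L[ℝ] F} {ν : E → V}
    {H : E →L[ℝ] V} (hG : HasFDerivAt G B x) (hν : HasFDerivAt ν H x) (u : V) :
    HasFDerivAt (fun y => ((G y).toLinearMap ∘ₗ proj (ν y)) u)
      (B.flip (proj (ν x) u) - ((innerSL ℝ u).comp H).smulRight (G x (ν x))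
        - ⟪ν x, u⟫ • (G x).comp H) x := by
  have h := (hG.clm_apply (hasFDerivAt_const u x)).sub
    ((hν.inner ℝ (hasFDerivAt_const u x)).smul (hG.clm_apply hν))
  have hfun : (fun y => ((G y).toLinearMap ∘ₗ proj (ν y)) u) =
      fun y => G y u - ⟪ν y, u⟫ • G y (ν y) := by
    ext y; simp [proj_apply]
  rw [hfun]
  refine h.congr_fderiv ?_
  ext v
  simp [fderivInnerCLM_apply, proj_apply, real_inner_comm u]
  abel

end Calculus

section Gradient

variable {V : Type*} [NormedAddCommGroup V] [InnerProductSpace ℝ V] [CompleteSpace V]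
  {b : V → ℝ} {x : V}

lemma HasFDerivAt.hasFDerivAt_gradient {D : V →L[ℝ] StrongDual ℝ V}
    (h : HasFDerivAt (fderiv ℝ b) D x) :
    HasFDerivAt (gradient b)
      ((InnerProductSpace.toDual ℝ V).symm.toContinuousLinearEquiv.toContinuousLinearMap.comp D)
      x :=
  (InnerProductSpace.toDual ℝ V).symm.hasFDerivAt.comp x h

lemma ContDiffAt.hasFDerivAt_gradient (hb : ContDiffAt ℝ 2 b x) :
    HasFDerivAt (gradient b) (fderiv ℝ (gradient b) x) x :=
  hb.hasFDerivAt_fderiv.hasFDerivAt_gradient.differentiableAt.hasFDerivAt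

lemma ContDiffAt.inner_fderiv_gradient_apply (hb : ContDiffAt ℝ 2 b x) (u v : V) :
    ⟪fderiv ℝ (gradient b) x u, v⟫ = fderiv ℝ (fderiv ℝ b) x u v := by
  rw [hb.hasFDerivAt_fderiv.hasFDerivAt_gradient.fderiv]
  exact InnerProductSpace.toDual_symm_apply

lemma ContDiffAt.isSymmetric_fderiv_gradient (hb : ContDiffAt ℝ 2 b x) :
    (fderiv ℝ (gradient b) x).toLinearMap.IsSymmetric := fun u v => by
  rw [ContinuousLinearMap.coe_coe, real_inner_comm _ u,
    hb.inner_fderiv_gradient_apply, hb.inner_fderiv_gradient_apply]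
  exact (hb.isSymmSndFDerivAt (by simp)) u v

lemma ContDiffAt.fderiv_gradient_apply_gradient_eq_zero {c : ℝ} (hb : ContDiffAt ℝ 2 b x)
    (hc : ∀ᶠ y in 𝓝 x, ‖gradient b y‖ = c) : fderiv ℝ (gradient b) x (gradient b x) = 0 :=
  ext_inner_right ℝ fun v => by
    rw [← ContinuousLinearMap.coe_coe, hb.isSymmetric_fderiv_gradient, real_inner_comm,
      ContinuousLinearMap.coe_coe,
      hb.hasFDerivAt_gradient.inner_apply_eq_zero_of_eventually_norm_eq hc, inner_zero_left]

end Gradient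

lemma fderiv_comp_proj_apply_proj_swap {V F : Type*} [NormedAddCommGroup V]
    [InnerProductSpace ℝ V] [NormedAddCommGroup F] [NormedSpace ℝ F] {G : V → V →L[ℝ] F}
    {B : V →L[ℝ] V →L[ℝ] F} {ν : V → V} {H : V →L[ℝ] V} {x : V} (hG : HasFDerivAt G B x)
    (hB : ∀ u v, B u v = B v u) (hν : HasFDerivAt ν H x) (hH : H.toLinearMap.IsSymmetric)
    (hνx : ‖ν x‖ = 1) (hHν : H (ν x) = 0) (u e : V) :
    fderiv ℝ (fun y => ((G y).toLinearMap ∘ₗ proj (ν y)) u) x (proj (ν x) e) =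
      fderiv ℝ (fun y => ((G y).toLinearMap ∘ₗ proj (ν y)) (proj (ν x) e)) x (proj (ν x) u)
        - ⟪ν x, u⟫ • G x (H e) := by
  have hHe : ⟪proj (ν x) e, H u⟫ = ⟪u, H e⟫ := calc
    _ = ⟪H (proj (ν x) e), u⟫ := (hH _ _).symm
    _ = ⟪u, H e⟫ := by rw [map_proj_of_map_eq_zero hHν, real_inner_comm]
  rw [(hG.comp_proj_apply hν u).fderiv, (hG.comp_proj_apply hν _).fderiv]
  simp [hHe, map_proj_of_map_eq_zero hHν, proj_proj hνx, inner_proj_right_eq_zero hνx,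
    hB (proj _ e)]

/-- The hypersurface is a level set of `b` with `|∇b| = 1` near `x`, so `n = ∇b`; the identity
is tested against every vector `e`, with `D_Γw = Dw ∘ P`, `Div_Γ w = tr(D_Γw)` and
`(P Div_Γ(D_Γwᵀ))·e = Div_Γ(D_Γw (P e))`. -/
theorem tangential_grad_tangential_div {N : ℕ}
    (b : EuclideanSpace ℝ (Fin N) → ℝ) (hb : ContDiff ℝ 3 b)
    (U : Set (EuclideanSpace ℝ (Fin N))) (hU : IsOpen U)
    (heik : ∀ y ∈ U, ‖gradient b y‖ = 1)
    (w : EuclideanSpace ℝ (Fin N) → EuclideanSpace ℝ (Fin N)) (hw : ContDiff ℝ 3 w)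
    (x : EuclideanSpace ℝ (Fin N)) (hx : x ∈ U) :
    ∀ e, ⟪proj (gradient b x)
        (gradient (fun y => LinearMap.trace ℝ (EuclideanSpace ℝ (Fin N))
          ((fderiv ℝ w y).toLinearMap ∘ₗ proj (gradient b y))) x), e⟫ =
      LinearMap.trace ℝ (EuclideanSpace ℝ (Fin N))
        ((fderiv ℝ (fun y => ((fderiv ℝ w y).toLinearMap ∘ₗ proj (gradient b y))
            (proj (gradient b x) e)) x).toLinearMap ∘ₗ proj (gradient b x)) -
      ⟪((fderiv ℝ (gradient b) x).toLinearMap ∘ₗ proj (gradient b x))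
        (LinearMap.adjoint ((fderiv ℝ w x).toLinearMap ∘ₗ proj (gradient b x))
          (gradient b x)), e⟫ := by
  intro e
  have hb2 : ContDiffAt ℝ 2 b x := hb.contDiffAt.of_le (by norm_num)
  have hw2 : ContDiffAt ℝ 2 w x := hw.contDiffAt.of_le (by norm_num)
  have hG := hw2.hasFDerivAt_fderiv
  have hν := hb2.hasFDerivAt_gradient
  have hH := hb2.isSymmetric_fderiv_gradient
  have hHν := hb2.fderiv_gradient_apply_gradient_eq_zero
    (Filter.mem_of_superset (hU.mem_nhds hx) heik)
  have hswap := fderiv_comp_proj_apply_proj_swap hG (hw2.isSymmSndFDerivAt (by simp)) hν hH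
    (heik x hx) hHν
  let bs := EuclideanSpace.basisFun (Fin N) ℝ
  rw [isSymmetric_proj, inner_gradient_left,
    fderiv_trace_apply bs fun u => (hG.comp_proj_apply hν u).differentiableAt,
    LinearMap.trace_eq_sum_inner _ bs, inner_comp_proj_adjoint_apply hH hHν]
  simp only [hswap _ e, inner_sub_right, inner_smul_right, Finset.sum_sub_distrib,
    bs.sum_inner_mul_inner]
  rfl
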